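/- The integral f(3/2, √3) = ∫_0^∞ (x²+1)^(−3/2) · (φ(x) + √(φ(x)))^(−1/2) dx, where φ(x) = 1 + (4/3)·(x/(x²+1))², is not equal to π/(2√6); that is, Gradshteyn–Ryzhik entry 3.248.5 is incorrect. -/

import Mathlib

open Real MeasureTheory

noncomputable def φ (x : ℝ) : ℝ := 1 + (4 / 3) * (x / (x ^ 2 + 1)) ^ 2

noncomputable def sfun (x : ℝ) : ℝ := x / Real.sqrt (x ^ 2 + 1)

noncomputable def Ffun (x : ℝ) : ℝ :=
  (Real.sqrt 2)⁻¹ * (sfun x - (sfun x) ^ 3 / 6 + (sfun x) ^ 5 / 10)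

noncomputable def Lfun (x : ℝ) : ℝ :=
  (Real.sqrt 2)⁻¹ * (1 - (sfun x) ^ 2 / 2 + (sfun x) ^ 4 / 2) /
    ((x ^ 2 + 1) * Real.sqrt (x ^ 2 + 1))

lemma hA_pos (x : ℝ) : (0:ℝ) < x ^ 2 + 1 := by positivity

lemma hsA_pos (x : ℝ) : 0 < Real.sqrt (x ^ 2 + 1) := Real.sqrt_pos.mpr (hA_pos x)

lemma hsA_sq (x : ℝ) : Real.sqrt (x ^ 2 + 1) ^ 2 = x ^ 2 + 1 := Real.sq_sqrt (hA_pos x).le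

lemma sfun_hasDerivAt (x : ℝ) :
    HasDerivAt sfun (1 / ((x ^ 2 + 1) * Real.sqrt (x ^ 2 + 1))) x := by
  have hA := hA_pos x
  have hsA := hsA_pos x
  have h1 : HasDerivAt (fun y : ℝ => y ^ 2 + 1) (2 * x) x := by
    simpa using ((hasDerivAt_pow 2 x).add_const 1)
  have h2 : HasDerivAt (fun y : ℝ => Real.sqrt (y ^ 2 + 1))
      (1 / (2 * Real.sqrt (x ^ 2 + 1)) * (2 * x)) x :=
    (Real.hasDerivAt_sqrt hA.ne').comp x h1
  have h3 := (hasDerivAt_id x).div h2 hsA.ne'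
  refine HasDerivAt.congr_deriv h3 (Eq.symm ?_)
  have hq := hsA_sq x
  simp only [id]
  field_simp
  linear_combination (-x ^ 2) * hq

lemma Ffun_hasDerivAt (x : ℝ) : HasDerivAt Ffun (Lfun x) x := by
  have hs := sfun_hasDerivAt x
  have h := ((hs.sub ((hs.pow 3).div_const 6)).add ((hs.pow 5).div_const 10)).const_mul
    (Real.sqrt 2)⁻¹
  refine HasDerivAt.congr_deriv h (Eq.symm ?_)
  unfold Lfun
  have hsA := hsA_pos x
  field_simp
  ring

lemma sfun_sq (x : ℝ) : (sfun x) ^ 2 = x ^ 2 / (x ^ 2 + 1) := by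
  unfold sfun
  rw [div_pow, hsA_sq]

lemma Lfun_nonneg (x : ℝ) : 0 ≤ Lfun x := by
  unfold Lfun
  have hsA := hsA_pos x
  have hA := hA_pos x
  apply div_nonneg _ (by positivity)
  have h : (0:ℝ) ≤ 1 - (sfun x) ^ 2 / 2 + (sfun x) ^ 4 / 2 := by
    nlinarith [sq_nonneg ((sfun x) ^ 2 - 1), sq_nonneg (sfun x)]
  positivity

lemma key_bound (x : ℝ) :
    Lfun x ≤ (x ^ 2 + 1) ^ (-(3 / 2) : ℝ) * (φ x + Real.sqrt (φ x)) ^ (-(1 / 2) : ℝ) := by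
  have hA := hA_pos x
  have hsA := hsA_pos x
  have hq := hsA_sq x
  set A := x ^ 2 + 1 with hAdef
  set v : ℝ := x ^ 2 / A ^ 2 with hvdef
  have hv0 : 0 ≤ v := by positivity
  have hv1 : v ≤ 1 := by
    rw [hvdef, div_le_one (by positivity)]
    nlinarith [sq_nonneg x, sq_nonneg (x^2)]
  have hphi : φ x = 1 + (4 / 3) * v := by
    unfold φ
    rw [hvdef, div_pow]
  have hphi1 : (1:ℝ) ≤ φ x := by rw [hphi]; nlinarith
  have hsqrtphi : Real.sqrt (φ x) ≤ 1 + (2 / 3) * v := by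
    have h1 : φ x ≤ (1 + (2 / 3) * v) ^ 2 := by rw [hphi]; nlinarith [sq_nonneg v]
    calc Real.sqrt (φ x) ≤ Real.sqrt ((1 + (2 / 3) * v) ^ 2) := Real.sqrt_le_sqrt h1
      _ = 1 + (2 / 3) * v := Real.sqrt_sq (by nlinarith)
  set B : ℝ := φ x + Real.sqrt (φ x) with hBdef
  have hB0 : 0 < B := by
    have := Real.sqrt_nonneg (φ x); rw [hBdef]; nlinarith
  have hBle : B ≤ 2 + 2 * v := by
    rw [hBdef]; linarith [hsqrtphi, hphi.le]
  set P : ℝ := 1 - (sfun x) ^ 2 / 2 + (sfun x) ^ 4 / 2 with hPdef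
  have hs2 := sfun_sq x
  have hP : P = 1 - v / 2 := by
    rw [hPdef, hvdef]
    have h4 : (sfun x) ^ 4 = ((sfun x) ^ 2) ^ 2 := by ring
    rw [h4, hs2]
    field_simp
    ring
  have hPpos : 0 ≤ P := by rw [hP]; nlinarith
  have hkey : P ^ 2 * B ≤ 2 := by
    have h1 : P ^ 2 * B ≤ P ^ 2 * (2 + 2 * v) :=
      mul_le_mul_of_nonneg_left hBle (sq_nonneg P)
    have h2 : P ^ 2 * (2 + 2 * v) ≤ 2 := by rw [hP]; nlinarith [sq_nonneg v, hv0, hv1]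
    linarith
  have hsB : 0 < Real.sqrt B := Real.sqrt_pos.mpr hB0
  have hPB : P * Real.sqrt B ≤ Real.sqrt 2 := by
    have h1 : P * Real.sqrt B = Real.sqrt (P ^ 2 * B) := by
      rw [Real.sqrt_mul (sq_nonneg P), Real.sqrt_sq hPpos]
    rw [h1]
    exact Real.sqrt_le_sqrt hkey
  have h2pos : (0:ℝ) < Real.sqrt 2 := by positivity
  have hmain : (Real.sqrt 2)⁻¹ * P ≤ (Real.sqrt B)⁻¹ := by
    rw [inv_eq_one_div (Real.sqrt B), le_div_iff₀ hsB, inv_mul_eq_div, div_mul_eq_mul_div,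
      div_le_one h2pos]
    exact hPB
  have hrA : A ^ (-(3 / 2) : ℝ) = (A * Real.sqrt A)⁻¹ := by
    rw [Real.rpow_neg hA.le]
    congr 1
    rw [show ((3:ℝ)/2) = 1 + 1/2 by norm_num, Real.rpow_add hA, Real.rpow_one,
      ← Real.sqrt_eq_rpow]
  have hrB : B ^ (-(1 / 2) : ℝ) = (Real.sqrt B)⁻¹ := by
    rw [Real.rpow_neg hB0.le, ← Real.sqrt_eq_rpow]
  show (Real.sqrt 2)⁻¹ * P / (A * Real.sqrt A) ≤ A ^ (-(3 / 2) : ℝ) * B ^ (-(1 / 2) : ℝ)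
  rw [hrA, hrB, div_eq_mul_inv, mul_comm ((A * Real.sqrt A)⁻¹)]
  exact mul_le_mul_of_nonneg_right hmain (by positivity)

lemma sfun_tendsto : Filter.Tendsto sfun Filter.atTop (nhds 1) := by
  have h1 : Filter.Tendsto (fun x : ℝ => 1 - 1 / (x ^ 2 + 1)) Filter.atTop (nhds 1) := by
    have h2 : Filter.Tendsto (fun x : ℝ => x ^ 2 + 1) Filter.atTop Filter.atTop :=
      (Filter.tendsto_pow_atTop (by norm_num : (2:ℕ) ≠ 0)).atTop_add tendsto_const_nhds
    have h3 : Filter.Tendsto (fun x : ℝ => 1 / (x ^ 2 + 1)) Filter.atTop (nhds 0) := by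
      simpa [Pi.inv_def] using h2.inv_tendsto_atTop
    simpa using (tendsto_const_nhds (x := (1:ℝ))).sub h3
  have h4 : Filter.Tendsto (fun x : ℝ => Real.sqrt (1 - 1 / (x ^ 2 + 1))) Filter.atTop
      (nhds 1) := by
    have := (Real.continuous_sqrt.tendsto 1).comp h1
    simpa [Function.comp_def] using this
  apply h4.congr'
  filter_upwards [Filter.eventually_ge_atTop (0:ℝ)] with x hx
  have hA := hA_pos x
  have h5 : 1 - 1 / (x ^ 2 + 1) = (sfun x) ^ 2 := by
    rw [sfun_sq]; field_simp; ring
  rw [h5, Real.sqrt_sq (by unfold sfun; positivity)]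

lemma Ffun_tendsto : Filter.Tendsto Ffun Filter.atTop (nhds ((Real.sqrt 2)⁻¹ * (14 / 15))) := by
  have hs := sfun_tendsto
  have h := ((hs.sub ((hs.pow 3).div_const 6)).add ((hs.pow 5).div_const 10)).const_mul
    (Real.sqrt 2)⁻¹
  unfold Ffun
  convert h using 2
  norm_num

lemma Ffun_continuous : Continuous Ffun := by
  have hscont : Continuous sfun := by
    apply Continuous.div continuous_id
    · exact Real.continuous_sqrt.comp (by continuity)
    · exact fun x => (hsA_pos x).ne'
  unfold Ffun
  fun_prop

theorem stmt_8 :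
    (∫ x in Set.Ioi (0 : ℝ),
        (x ^ 2 + 1) ^ (-(3 / 2) : ℝ) * (φ x + Real.sqrt (φ x)) ^ (-(1 / 2) : ℝ)) ≠
      Real.pi / (2 * Real.sqrt 6) := by
  by_cases hint : IntegrableOn
      (fun x : ℝ => (x ^ 2 + 1) ^ (-(3 / 2) : ℝ) * (φ x + Real.sqrt (φ x)) ^ (-(1 / 2) : ℝ))
      (Set.Ioi (0:ℝ)) volume
  · have hcont : ContinuousWithinAt Ffun (Set.Ici (0:ℝ)) 0 :=
      Ffun_continuous.continuousAt.continuousWithinAt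
    have hderiv : ∀ x ∈ Set.Ioi (0:ℝ), HasDerivAt Ffun (Lfun x) x :=
      fun x _ => Ffun_hasDerivAt x
    have hLint : IntegrableOn Lfun (Set.Ioi (0:ℝ)) volume :=
      integrableOn_Ioi_deriv_of_nonneg hcont hderiv (fun x _ => Lfun_nonneg x) Ffun_tendsto
    have hIval : ∫ x in Set.Ioi (0:ℝ), Lfun x = (Real.sqrt 2)⁻¹ * (14 / 15) - Ffun 0 :=
      integral_Ioi_of_hasDerivAt_of_tendsto hcont hderiv hLint Ffun_tendsto
    have hF0 : Ffun 0 = 0 := by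
      unfold Ffun sfun; norm_num
    have hmono : (∫ x in Set.Ioi (0:ℝ), Lfun x) ≤
        ∫ x in Set.Ioi (0:ℝ),
          (x ^ 2 + 1) ^ (-(3 / 2) : ℝ) * (φ x + Real.sqrt (φ x)) ^ (-(1 / 2) : ℝ) :=
      setIntegral_mono_on hLint hint measurableSet_Ioi (fun x _ => key_bound x)
    have hlt : Real.pi / (2 * Real.sqrt 6) < (Real.sqrt 2)⁻¹ * (14 / 15) := by
      have h2 : (0:ℝ) < Real.sqrt 2 := by positivity
      have h6 : (0:ℝ) < Real.sqrt 6 := by positivity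
      have s2 : Real.sqrt 2 ^ 2 = 2 := Real.sq_sqrt (by norm_num)
      have s6 : Real.sqrt 6 ^ 2 = 6 := Real.sq_sqrt (by norm_num)
      have hpi := Real.pi_lt_d2
      have hpi0 := Real.pi_pos
      rw [show (Real.sqrt 2)⁻¹ * (14 / 15 : ℝ) = 14 / (15 * Real.sqrt 2) by
        field_simp]
      rw [div_lt_div_iff₀ (by positivity) (by positivity)]
      have hsq : (Real.pi * (15 * Real.sqrt 2)) ^ 2 < (14 * (2 * Real.sqrt 6)) ^ 2 := by
        have e1 : (Real.pi * (15 * Real.sqrt 2)) ^ 2 = 450 * Real.pi ^ 2 := by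
          rw [mul_pow, mul_pow, s2]; ring
        have e2 : ((14:ℝ) * (2 * Real.sqrt 6)) ^ 2 = 4704 := by
          rw [mul_pow, mul_pow, s6]; ring
        rw [e1, e2]; nlinarith [hpi, hpi0]
      exact lt_of_pow_lt_pow_left₀ 2 (by positivity) hsq
    rw [hF0, sub_zero] at hIval
    exact ne_of_gt (lt_of_lt_of_le (hIval ▸ hlt) hmono)
  · rw [MeasureTheory.integral_undef hint]
    exact ne_of_lt (by positivity)
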